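/- arXiv:1309.0135 — 7 statements merged into one kernel-verified Lean document; each statement's English description precedes it below -/
import Mathlib

section
/- Let M/k be a field extension and let L and E be intermediate fields of M/k such that E is algebraic over k, M is the compositum L ⊔ E, and M is finite-dimensional over L with f = [M : L]. If L and E are linearly disjoint over k inside M, then E is finite over k and [E : k] = f. -/
/-!
Since `E` is algebraic over `k`, the field `L ⊔ E = M` is already the ring `L[E]`; linear
disjointness then makes every `k`-basis of `E` an `L`-basis of `M`, so `[E : k] = [M : L]`.
-/

open Module

namespace IntermediateField.LinearDisjoint

variable {F E : Type*} [Field F] [Field E] [Algebra F E] {A B : IntermediateField F E}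

theorem rank_left_eq_rank (H : A.LinearDisjoint B)
    (H' : A.toSubalgebra ⊔ B.toSubalgebra = ⊤) : Module.rank A E = Module.rank F B := by
  let b := Free.chooseBasis F B
  rw [← (H.basisOfBasisRight H' b).mk_eq_rank'', ← b.mk_eq_rank'']

theorem finiteDimensional_right_and_finrank_eq [Algebra.IsAlgebraic F B] [FiniteDimensional A E]
    (H : A.LinearDisjoint B) (H' : A ⊔ B = ⊤) :
    FiniteDimensional F B ∧ finrank F B = finrank A E := by
  have hrank := H.rank_left_eq_rank (by rw [← sup_toSubalgebra_of_isAlgebraic_right, H']; rfl)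
  have hfin : FiniteDimensional F B :=
    rank_lt_aleph0_iff.mp (hrank ▸ rank_lt_aleph0 A E)
  exact ⟨hfin, finrank_eq_of_rank_eq (by rw [← hrank, finrank_eq_rank])⟩

end IntermediateField.LinearDisjoint

/-- Converse direction of Lemma 1: if `E` is algebraic over `k`, `M = L ⊔ E`, `M` is
finite over `L` of degree `f`, and `L` and `E` are linearly disjoint over `k` inside `M`,
then `E` is finite over `k` and `[E : k] = f`. -/
theorem stmt_3 {k M : Type*} [Field k] [Field M] [Algebra k M]
    (L E : IntermediateField k M)
    [Algebra.IsAlgebraic k E]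
    (hcomp : L ⊔ E = ⊤)
    [FiniteDimensional L M]
    (f : ℕ) (hf : f = Module.finrank L M)
    (hdisj : L.toSubalgebra.LinearDisjoint E.toSubalgebra) :
    FiniteDimensional k E ∧ Module.finrank k E = f :=
  hf ▸ (IntermediateField.linearDisjoint_iff'.mpr hdisj).finiteDimensional_right_and_finrank_eq
    hcomp
end

section
/- Let k be a field, n ≥ 1, and let v be a valuation on the polynomial ring k[x_1, …, x_n] with values in ℝ≥0 such that v(c) = 1 for every nonzero constant c ∈ k, v(x_i) ≠ 0 for all i, and the values v(x_1), …, v(x_n) are multiplicatively rationally independent. Then for every nonzero f ∈ k[x_1, …, x_n], v(f) = max over the exponent vectors α in the support of f of ∏_i v(x_i)^{α_i}; in particular v(f) ≠ 0 and v is completely determined by its values on the variables. -/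
/-!
Rational independence of the values `v xᵢ` means that distinct exponent vectors give monomials
of distinct values. In a sum whose terms have pairwise distinct values the ultrametric
inequality is an equality, so `v f` is the value of its largest monomial.
-/

open MvPolynomial

namespace Valuation

variable {R Γ₀ : Type*} [Ring R] [LinearOrderedCommMonoidWithZero Γ₀] (v : Valuation R Γ₀)

theorem map_sum_eq_sup'_of_injOn {ι : Type*} {s : Finset ι} (hs : s.Nonempty) {f : ι → R}
    (hinj : Set.InjOn (v ∘ f) s) : v (∑ i ∈ s, f i) = s.sup' hs (v ∘ f) := by
  classical
  obtain ⟨j, hj, hmax⟩ := s.exists_mem_eq_sup' hs (v ∘ f)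
  rw [hmax]
  refine v.map_sum_eq_of_lt hj fun i hi => ?_
  obtain ⟨his, hij⟩ := Finset.mem_sdiff.mp hi
  refine lt_of_le_of_ne ((s.le_sup' (v ∘ f) his).trans_eq hmax) fun h => ?_
  exact Finset.notMem_singleton.mp hij (hinj his hj h)

end Valuation

namespace MvPolynomial

variable {σ R Γ₀ : Type*} [Fintype σ] [CommRing R] [LinearOrderedCommMonoidWithZero Γ₀]
  (v : Valuation (MvPolynomial σ R) Γ₀)

theorem valuation_monomial (α : σ →₀ ℕ) (a : R) :
    v (monomial α a) = v (C a) * ∏ i, v (X i) ^ α i := by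
  rw [monomial_eq, map_mul, Finsupp.prod_fintype _ _ (by simp), map_prod]
  simp only [map_pow]

theorem valuation_eq_sup'_of_injective (hC : ∀ a : R, a ≠ 0 → v (C a) = 1)
    (hinj : Function.Injective fun α : σ →₀ ℕ => ∏ i, v (X i) ^ α i)
    {f : MvPolynomial σ R} (hf : f ≠ 0) :
    v f = f.support.sup' (support_nonempty.mpr hf) fun α => ∏ i, v (X i) ^ α i := by
  have hterm : ∀ α ∈ f.support, v (monomial α (coeff α f)) = ∏ i, v (X i) ^ α i :=
    fun α hα => by rw [valuation_monomial, hC _ (mem_support_iff.mp hα), one_mul]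
  conv_lhs => rw [← support_sum_monomial_coeff f]
  rw [v.map_sum_eq_sup'_of_injOn (support_nonempty.mpr hf)]
  · exact Finset.sup'_congr _ rfl hterm
  · intro α hα β hβ h
    exact hinj ((hterm α hα).symm.trans (h.trans (hterm β hβ)))

end MvPolynomial

theorem prod_pow_injective_of_prod_zpow_eq_one {G₀ ι : Type*} [CommGroupWithZero G₀] [Fintype ι]
    {c : ι → G₀} (hc : ∀ i, c i ≠ 0) (hind : ∀ m : ι → ℤ, ∏ i, c i ^ m i = 1 → m = 0) :
    Function.Injective fun α : ι →₀ ℕ => ∏ i, c i ^ α i := by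
  intro α β hαβ
  have hdiff : ∏ i, c i ^ ((α i : ℤ) - β i) = 1 := by
    simp only [zpow_sub₀ (hc _), Finset.prod_div_distrib, zpow_natCast]
    exact (div_eq_one_iff_eq (Finset.prod_ne_zero_iff.mpr fun i _ => pow_ne_zero _ (hc i))).mpr
      hαβ
  ext i
  simpa [sub_eq_zero] using congrFun (hind _ hdiff) i

theorem stmt_5_general {k : Type*} [Field k] (n : ℕ)
    (v : Valuation (MvPolynomial (Fin n) k) NNReal)
    (hC : ∀ c : k, c ≠ 0 → v (MvPolynomial.C c) = 1)
    (hX : ∀ i : Fin n, v (MvPolynomial.X i) ≠ 0)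
    (hind : ∀ m : Fin n → ℤ, ∏ i, v (MvPolynomial.X i) ^ m i = 1 → m = 0)
    (f : MvPolynomial (Fin n) k) (hf : f ≠ 0) :
    v f = f.support.sup' (MvPolynomial.support_nonempty.mpr hf)
        (fun α => ∏ i, v (MvPolynomial.X i) ^ α i) ∧
      v f ≠ 0 := by
  have hvf :=
    valuation_eq_sup'_of_injective v hC (prod_pow_injective_of_prod_zpow_eq_one hX hind) hf
  refine ⟨hvf, ?_⟩
  obtain ⟨α, hα⟩ := MvPolynomial.support_nonempty.mpr hf
  have hα_pos : 0 < ∏ i, v (MvPolynomial.X i) ^ α i :=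
    pos_iff_ne_zero.mpr (Finset.prod_ne_zero_iff.mpr fun i _ => pow_ne_zero _ (hX i))
  rw [hvf]
  exact (hα_pos.trans_le (Finset.le_sup' (fun α => ∏ i, v (MvPolynomial.X i) ^ α i) hα)).ne'

/-- A valuation on `k[x₁,…,xₙ]` with values in `ℝ≥0` that is `1` on nonzero constants,
nonzero on the variables, and whose values on the variables are multiplicatively
rationally independent, is given on every nonzero polynomial by the maximum of the values
of the monomials in its support; in particular it is nonzero on nonzero polynomials. -/
theorem stmt_5 {k : Type*} [Field k] (n : ℕ) (hn : 1 ≤ n)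
    (v : Valuation (MvPolynomial (Fin n) k) NNReal)
    (hC : ∀ c : k, c ≠ 0 → v (MvPolynomial.C c) = 1)
    (hX : ∀ i : Fin n, v (MvPolynomial.X i) ≠ 0)
    (hind : ∀ m : Fin n → ℤ, ∏ i, v (MvPolynomial.X i) ^ m i = 1 → m = 0)
    (f : MvPolynomial (Fin n) k) (hf : f ≠ 0) :
    v f = f.support.sup' (MvPolynomial.support_nonempty.mpr hf)
        (fun α => ∏ i, v (MvPolynomial.X i) ^ α i) ∧
      v f ≠ 0 :=
  stmt_5_general n v hC hX hind f hf
end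

section
/- Let k be a field, n ≥ 1, and let v be a valuation on the formal power series ring k[[x_1, …, x_n]] with values in ℝ≥0 such that v(f) ≤ 1 for every f, and such that the values c_i = v(x_i) satisfy 0 < c_i < 1 for all i and are multiplicatively rationally independent. Then for every nonzero f ∈ k[[x_1, …, x_n]] there is an exponent vector α in the support of f with v(f) = ∏_i c_i^{α_i}, and ∏_i c_i^{β_i} ≤ v(f) for every β in the support of f. In particular v(f) ≠ 0 for all nonzero f. -/
/-!
Write `c α = ∏ i, v (X i) ^ α i`. Since every `v (X i)` lies below some `C < 1`, we have
`c α ≤ C ^ α i` for each `i`, so only finitely many exponents have `c α` above any given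
positive bound; hence `c` attains a maximum `M` on the support of `f`, and by multiplicative
independence at a single exponent `α`. Every exponent in the support of `g = f - (coeff α f) X^α`
then has value `< M`, and this forces `v g < M`: choosing `C ^ N < M`, the terms of `g` with all
exponents `< N` form a finite sum of monomials of value `< M`, and the rest of `g` lies in the
ideal `(X i ^ N)ᵢ`, where `v ≤ C ^ N`. The ultrametric equality then gives
`v f = v ((coeff α f) X^α) = M`.
-/

section MonomialValues

variable {σ : Type*} [Fintype σ]

theorem prod_pow_injective {G₀ : Type*} [CommGroupWithZero G₀] {c : σ → G₀} (hc : ∀ i, c i ≠ 0)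
    (hind : ∀ m : σ → ℤ, ∏ i, c i ^ m i = 1 → m = 0) :
    Function.Injective fun α : σ →₀ ℕ => ∏ i, c i ^ α i := by
  intro α β hαβ
  have hquot : ∏ i, c i ^ ((α i : ℤ) - β i) = 1 := by
    simp only [zpow_sub₀ (hc _), zpow_natCast, Finset.prod_div_distrib]
    exact (div_eq_one_iff_eq (Finset.prod_ne_zero_iff.mpr fun i _ => pow_ne_zero _ (hc i))).mpr
      hαβ
  ext i
  simpa [sub_eq_zero] using congrFun (hind _ hquot) i

variable {c : σ → NNReal} {C : NNReal}

theorem prod_pow_le_pow_apply (hc : ∀ j, c j ≤ 1) (β : σ →₀ ℕ) (i : σ) :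
    ∏ j, c j ^ β j ≤ c i ^ β i := by
  classical
  rw [← Finset.mul_prod_erase _ _ (Finset.mem_univ i)]
  exact mul_le_of_le_one_right' (Finset.prod_le_one' fun j _ => pow_le_one' (hc j) _)

theorem lt_of_pow_lt_prod_pow (hcC : ∀ i, c i ≤ C) (hC : C ≤ 1) {N : ℕ} {β : σ →₀ ℕ}
    (hβ : C ^ N < ∏ j, c j ^ β j) (i : σ) : β i < N := by
  by_contra! hNβ
  refine hβ.not_ge ?_
  calc ∏ j, c j ^ β j ≤ c i ^ β i := prod_pow_le_pow_apply (fun j => (hcC j).trans hC) β i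
    _ ≤ C ^ β i := pow_le_pow_left' (hcC i) _
    _ ≤ C ^ N := pow_le_pow_right_of_le_one' hC hNβ

theorem Finsupp.finite_setOf_forall_lt (N : ℕ) : {β : σ →₀ ℕ | ∀ i, β i < N}.Finite :=
  (Set.Finite.pi fun _ => Set.finite_Iio N).preimage DFunLike.coe_injective.injOn |>.subset
    fun _ hβ i _ => hβ i

theorem exists_max_prod_pow (hc : ∀ i, 0 < c i) (hcC : ∀ i, c i ≤ C) (hC : C < 1)
    {S : Set (σ →₀ ℕ)} (hS : S.Nonempty) :
    ∃ α ∈ S, ∀ β ∈ S, ∏ i, c i ^ β i ≤ ∏ i, c i ^ α i := by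
  obtain ⟨α₁, hα₁⟩ := hS
  obtain ⟨N, hN⟩ := NNReal.exists_pow_lt_of_lt_one
    (Finset.prod_pos fun i _ => pow_pos (hc i) (α₁ i)) hC
  obtain ⟨α, ⟨hαS, -⟩, hαmax⟩ := Set.exists_max_image (S ∩ {β | ∀ i, β i < N})
    (fun β => ∏ i, c i ^ β i) ((Finsupp.finite_setOf_forall_lt N).inter_of_right S)
    ⟨α₁, hα₁, lt_of_pow_lt_prod_pow hcC hC.le hN⟩
  refine ⟨α, hαS, fun β hβ => ?_⟩
  by_cases hβN : C ^ N < ∏ i, c i ^ β i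
  · exact hαmax β ⟨hβ, lt_of_pow_lt_prod_pow hcC hC.le hβN⟩
  · exact (not_lt.mp hβN).trans (hN.le.trans (hαmax α₁ ⟨hα₁, lt_of_pow_lt_prod_pow hcC hC.le hN⟩))

end MonomialValues

theorem Valuation.map_le_of_mem_span_range {R Γ₀ ι : Type*} [Ring R]
    [LinearOrderedCommMonoidWithZero Γ₀] [Fintype ι] {v : Valuation R Γ₀}
    (hle : ∀ x, v x ≤ 1) {f : ι → R} {r : Γ₀} (hf : ∀ i, v (f i) ≤ r) {x : R}
    (hx : x ∈ Ideal.span (Set.range f)) : v x ≤ r := by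
  obtain ⟨a, rfl⟩ := Ideal.mem_span_range_iff_exists_fun.mp hx
  refine v.map_sum_le fun i _ => ?_
  rw [map_mul]
  exact mul_le_of_le_one_left' (hle _) |>.trans (hf i)

namespace MvPowerSeries

variable {σ R : Type*} [CommRing R]

theorem mem_span_X_pow_of_coeff_eq_zero (e : σ → ℕ) (s : Finset σ) {g : MvPowerSeries σ R}
    (hg : ∀ α : σ →₀ ℕ, (∀ i ∈ s, α i < e i) → coeff α g = 0) :
    g ∈ Ideal.span ((fun i => X i ^ e i) '' s) := by
  classical
  induction s using Finset.induction generalizing g with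
  | empty => simp [show g = 0 from ext fun α => by simpa using hg α]
  | insert a s _ ih =>
    let r : MvPowerSeries σ R := fun α => if α a < e a then coeff α g else 0
    have hr (α) : coeff α r = if α a < e a then coeff α g else 0 := rfl
    have hr_mem : r ∈ Ideal.span ((fun i => X i ^ e i) '' s) := ih fun α hα => by
      rw [hr]
      split_ifs with ha
      · exact hg α (Finset.forall_mem_insert _ _ _ |>.mpr ⟨ha, hα⟩)
      · rfl
    obtain ⟨q, hq⟩ : X a ^ e a ∣ g - r := X_pow_dvd_iff.mpr fun α hα => by
      simp [hr, hα]
    rw [← sub_add_cancel g r, hq]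
    refine add_mem (Ideal.mul_mem_right _ _ (Ideal.subset_span ⟨a, by simp, rfl⟩))
      (Ideal.span_mono (Set.image_mono (by simp)) hr_mem)

variable {k : Type*} [Field k] [Fintype σ] {v : Valuation (MvPowerSeries σ k) NNReal}

theorem valuation_monomial (hle : ∀ f, v f ≤ 1) (α : σ →₀ ℕ) {a : k} (ha : a ≠ 0) :
    v (monomial α a) = ∏ i, v (X i) ^ α i := by
  have hC : v (C a) = 1 :=
    Valuation.Integers.one_of_isUnit' (O := MvPowerSeries σ k) (ha.isUnit.map C) hle
  rw [monomial_eq', map_mul, hC, one_mul, Finsupp.prod_fintype _ _ fun _ => pow_zero _,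
    map_prod]
  simp only [map_pow]

theorem valuation_le_pow_of_coeff_eq_zero (hle : ∀ f, v f ≤ 1) {C : NNReal}
    (hC : ∀ i, v (X i) ≤ C) {N : ℕ} {g : MvPowerSeries σ k}
    (hg : ∀ α : σ →₀ ℕ, (∀ i, α i < N) → coeff α g = 0) : v g ≤ C ^ N := by
  refine Valuation.map_le_of_mem_span_range hle (fun i => ?_) (f := fun i => X i ^ N) ?_
  · simpa using pow_le_pow_left' (hC i) N
  · simpa using mem_span_X_pow_of_coeff_eq_zero (fun _ => N) Finset.univ (by simpa using hg)

theorem valuation_lt_of_prod_pow_lt (hle : ∀ f, v f ≤ 1) {C : NNReal} (hC : ∀ i, v (X i) ≤ C)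
    (hC1 : C < 1) {M : NNReal} (hM : 0 < M) {g : MvPowerSeries σ k}
    (hg : ∀ β : σ →₀ ℕ, coeff β g ≠ 0 → ∏ i, v (X i) ^ β i < M) : v g < M := by
  classical
  obtain ⟨N, hN⟩ := NNReal.exists_pow_lt_of_lt_one hM hC1
  set box := (Finsupp.finite_setOf_forall_lt (σ := σ) N).toFinset
  set P := ∑ β ∈ box, monomial β (coeff β g)
  have hP : v P < M := v.map_sum_lt hM.ne' fun β _ => by
    by_cases hβ : coeff β g = 0
    · simpa [hβ] using hM
    · exact valuation_monomial hle β hβ ▸ hg β hβ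
  have htail : v (g - P) < M := by
    refine (valuation_le_pow_of_coeff_eq_zero hle hC fun α hα => ?_).trans_lt hN
    simp [P, coeff_monomial, box, hα]
  simpa using v.map_add_lt hP htail

end MvPowerSeries

theorem stmt_6_general {k : Type*} [Field k] (n : ℕ)
    (v : Valuation (MvPowerSeries (Fin n) k) NNReal)
    (hle : ∀ f : MvPowerSeries (Fin n) k, v f ≤ 1)
    (hpos : ∀ i : Fin n, 0 < v (MvPowerSeries.X i))
    (hlt : ∀ i : Fin n, v (MvPowerSeries.X i) < 1)
    (hind : ∀ m : Fin n → ℤ, ∏ i, v (MvPowerSeries.X i) ^ m i = 1 → m = 0)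
    (f : MvPowerSeries (Fin n) k) (hf : f ≠ 0) :
    (∃ α : Fin n →₀ ℕ, MvPowerSeries.coeff α f ≠ 0 ∧
        v f = ∏ i, v (MvPowerSeries.X i) ^ α i) ∧
      (∀ β : Fin n →₀ ℕ, MvPowerSeries.coeff β f ≠ 0 →
        ∏ i, v (MvPowerSeries.X i) ^ β i ≤ v f) ∧
      v f ≠ 0 := by
  obtain ⟨C, hcC, hC⟩ : ∃ C : NNReal, (∀ i, v (MvPowerSeries.X i) ≤ C) ∧ C < 1 :=
    ⟨Finset.univ.sup fun i => v (MvPowerSeries.X i),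
      fun i => Finset.le_sup (f := fun i => v (MvPowerSeries.X i)) (Finset.mem_univ i),
      (Finset.sup_lt_iff zero_lt_one).mpr fun i _ => hlt i⟩
  obtain ⟨α, hα, hmax⟩ := exists_max_prod_pow hpos hcC hC
    (S := {β | MvPowerSeries.coeff β f ≠ 0})
    ((MvPowerSeries.ne_zero_iff_exists_coeff_ne_zero f).mp hf)
  set M := ∏ i, v (MvPowerSeries.X i) ^ α i
  have hM : 0 < M := Finset.prod_pos fun i _ => pow_pos (hpos i) _
  set m₀ := MvPowerSeries.monomial α (MvPowerSeries.coeff α f)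
  have hrest : v (f - m₀) < M := by
    classical
    refine MvPowerSeries.valuation_lt_of_prod_pow_lt hle hcC hC hM fun β hβ => ?_
    have hβα : β ≠ α := by rintro rfl; simp [m₀] at hβ
    have hβf : MvPowerSeries.coeff β f ≠ 0 := by
      simpa [m₀, MvPowerSeries.coeff_monomial, hβα] using hβ
    exact (hmax β hβf).lt_of_ne fun h => hβα (prod_pow_injective (fun i => (hpos i).ne') hind h)
  have hm₀ : v m₀ = M := MvPowerSeries.valuation_monomial hle α hα
  have hvf : v f = M := by
    rw [← add_sub_cancel m₀ f, v.map_add_eq_of_lt_left (hm₀ ▸ hrest), hm₀]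
  exact ⟨⟨α, hα, hvf⟩, fun β hβ => hvf ▸ hmax β hβ, hvf ▸ hM.ne'⟩

/-- For a valuation `v ≤ 1` on `k[[x₁,…,xₙ]]` with `0 < v(xᵢ) < 1` multiplicatively
rationally independent, the value of every nonzero power series is attained by a monomial
of its support and dominates the value of every monomial of its support; in particular
`v(f) ≠ 0` for `f ≠ 0`. -/
theorem stmt_6 {k : Type*} [Field k] (n : ℕ) (hn : 1 ≤ n)
    (v : Valuation (MvPowerSeries (Fin n) k) NNReal)
    (hle : ∀ f : MvPowerSeries (Fin n) k, v f ≤ 1)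
    (hpos : ∀ i : Fin n, 0 < v (MvPowerSeries.X i))
    (hlt : ∀ i : Fin n, v (MvPowerSeries.X i) < 1)
    (hind : ∀ m : Fin n → ℤ, ∏ i, v (MvPowerSeries.X i) ^ m i = 1 → m = 0)
    (f : MvPowerSeries (Fin n) k) (hf : f ≠ 0) :
    (∃ α : Fin n →₀ ℕ, MvPowerSeries.coeff α f ≠ 0 ∧
        v f = ∏ i, v (MvPowerSeries.X i) ^ α i) ∧
      (∀ β : Fin n →₀ ℕ, MvPowerSeries.coeff β f ≠ 0 →
        ∏ i, v (MvPowerSeries.X i) ^ β i ≤ v f) ∧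
      v f ≠ 0 :=
  stmt_6_general n v hle hpos hlt hind f hf
end

section
/- Let k be a field, n ≥ 1, and let K be the fraction field of the formal power series ring k[[x_1, …, x_n]]. Let v be a valuation on K with values in ℝ≥0 such that v is at most 1 on (the image in K of) every element of k[[x_1, …, x_n]], and the values c_i = v(x_i) satisfy 0 < c_i < 1 and are multiplicatively rationally independent. Let O_v = {x ∈ K : v(x) ≤ 1} be the valuation subring of v and m_v its maximal ideal. Then the ring homomorphism k → O_v/m_v induced by including k as constants is bijective; that is, the residue field of v is isomorphic to k via the natural map. -/
/-!
Under these hypotheses the value of a nonzero power series `f` is the largest value of a monomial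
in its support. Since `v (X^α) ≤ r ^ |α|` with `r = max v (X i) < 1`, only finitely many monomials
compete for the maximum, and it is attained by a single monomial because distinct monomials have
distinct values; the remaining tail of degree `≥ e` lies in `(X₁, …, Xₙ)^e`, so it has value
`≤ r ^ e` and does not interfere. Now let `f / g` lie in the valuation ring. Either the leading
monomial of `f` has smaller value than that of `g`, and then `f / g` lies in the maximal ideal, or
the two leading monomials coincide. In the second case subtracting the ratio `c` of the leading
coefficients cancels the leading term, so `f / g ≡ c` modulo the maximal ideal. Injectivity is
automatic, since the map is a ring homomorphism out of a field.
-/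

open scoped NNReal

theorem injective_prod_pow_of_prod_zpow_eq_one {ι M : Type*} [Fintype ι] [CommGroupWithZero M]
    {c : ι → M} (hc : ∀ i, c i ≠ 0) (hind : ∀ m : ι → ℤ, ∏ i, c i ^ m i = 1 → m = 0) :
    Function.Injective fun α : ι →₀ ℕ => ∏ i, c i ^ α i := by
  intro α β h
  have hαβ := hind (fun i => (α i : ℤ) - β i) <| by
    simp_rw [zpow_sub₀ (hc _), Finset.prod_div_distrib, zpow_natCast]
    exact div_eq_one_iff_eq (Finset.prod_ne_zero_iff.mpr fun i _ => pow_ne_zero _ (hc i)) |>.mpr h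
  ext i
  simpa [sub_eq_zero] using congrFun hαβ i

namespace MvPowerSeries

open Finsupp

structure IsMonomialValuation {σ k : Type*} [Field k] (u : Valuation (MvPowerSeries σ k) ℝ≥0) :
    Prop where
  le_one : ∀ f, u f ≤ 1
  X_pos : ∀ i, 0 < u (X i)
  X_lt_one : ∀ i, u (X i) < 1
  injective : Function.Injective fun α : σ →₀ ℕ => u (monomial α 1)

variable {σ : Type*} [Fintype σ]

theorem exists_eq_sum_X_mul_of_constantCoeff_eq_zero {R : Type*} [CommSemiring R]
    {f : MvPowerSeries σ R} (hf : constantCoeff f = 0) :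
    ∃ g : σ → MvPowerSeries σ R, f = ∑ i, X i * g i ∧
      ∀ i β, coeff β (g i) ≠ 0 → coeff (β + single i 1) f ≠ 0 := by
  classical
  let _ : LinearOrder σ := LinearOrder.lift' _ (Fintype.equivFin σ).injective
  -- `X i * g i` collects the terms of `f` whose least variable is `X i`
  let g : σ → MvPowerSeries σ R := fun i β =>
    if IsLeast ((β + single i 1).support : Set σ) i then coeff (β + single i 1) f else 0
  have hg : ∀ i α, coeff α (X i * g i) =
      if IsLeast (α.support : Set σ) i then coeff α f else 0 := by
    intro i α
    rw [X_def, coeff_monomial_mul, one_mul]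
    by_cases hi : single i 1 ≤ α
    · rw [if_pos hi]
      exact congrArg (fun β => if IsLeast (β.support : Set σ) i then coeff β f else 0)
        (tsub_add_cancel_of_le hi)
    · have hαi : α i = 0 := by simpa [single_le_iff] using hi
      rw [if_neg hi, if_neg fun h => by simpa [hαi] using h.1]
  refine ⟨g, ?_, fun i β => ?_⟩
  · ext α
    simp only [map_sum, hg]
    rcases eq_or_ne α 0 with rfl | hα
    · simp [hf]
    · have hleast := Finset.isLeast_min' _ (support_nonempty_iff.mpr hα)
      rw [Finset.sum_eq_single_of_mem _ (Finset.mem_univ _)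
        fun i _ hi => if_neg fun h => hi (h.unique hleast), if_pos hleast]
  · show (if _ then _ else (0 : R)) ≠ 0 → _
    split_ifs <;> simp

theorem valuation_le_pow_of_le_order {R Γ₀ : Type*} [CommRing R]
    [LinearOrderedCommMonoidWithZero Γ₀] (u : Valuation (MvPowerSeries σ R) Γ₀)
    (hu : ∀ f, u f ≤ 1) {r : Γ₀} (hX : ∀ i, u (X i) ≤ r) :
    ∀ {d : ℕ} {f : MvPowerSeries σ R}, d ≤ f.order → u f ≤ r ^ d
  | 0, f, _ => by simpa using hu f
  | d + 1, f, hf => by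
    obtain ⟨g, rfl, hg⟩ := exists_eq_sum_X_mul_of_constantCoeff_eq_zero
      (one_le_order_iff_constCoeff_eq_zero.mp (le_trans (by simp) hf))
    refine u.map_sum_le fun i _ => ?_
    rw [u.map_mul, pow_succ']
    refine mul_le_mul' (hX i) (valuation_le_pow_of_le_order u hu hX (nat_le_order fun β hβ => ?_))
    by_contra h
    have := hf.trans (order_le (hg i β h))
    rw [map_add, degree_single] at this
    exact absurd this (by norm_cast; omega)

theorem valuation_monomial_one {R Γ₀ : Type*} [CommRing R] [LinearOrderedCommMonoidWithZero Γ₀]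
    (u : Valuation (MvPowerSeries σ R) Γ₀) (α : σ →₀ ℕ) :
    u (monomial α 1) = ∏ i, u (X i) ^ α i := by
  rw [monomial_one_eq, map_finsuppProd, Finsupp.prod_fintype _ _ (by simp)]
  simp only [map_pow]

theorem valuation_monomial_one_le_pow {R : Type*} [CommRing R]
    (u : Valuation (MvPowerSeries σ R) ℝ≥0) {r : ℝ≥0} (hX : ∀ i, u (X i) ≤ r) (α : σ →₀ ℕ) :
    u (monomial α 1) ≤ r ^ degree α := by
  rw [valuation_monomial_one, degree_eq_sum, ← Finset.prod_pow_eq_pow_sum]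
  exact Finset.prod_le_prod' fun i _ => pow_le_pow_left₀ zero_le (hX i) _

namespace IsMonomialValuation

variable {k : Type*} [Field k] {u : Valuation (MvPowerSeries σ k) ℝ≥0}

omit [Fintype σ] in
theorem valuation_monomial (hu : IsMonomialValuation u) {a : k} (ha : a ≠ 0) (α : σ →₀ ℕ) :
    u (monomial α a) = u (monomial α 1) := by
  have hC : u (C a) = 1 := Valuation.Integers.one_of_isUnit' (O := MvPowerSeries σ k)
    ((isUnit_iff_ne_zero.mpr ha).map C) hu.le_one
  rw [monomial_eq', map_mul, hC, one_mul, monomial_one_eq]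

theorem valuation_monomial_one_pos (hu : IsMonomialValuation u) (α : σ →₀ ℕ) :
    0 < u (monomial α 1) := by
  rw [valuation_monomial_one]
  exact Finset.prod_pos fun i _ => pow_pos (hu.X_pos i) _

theorem exists_lt_one_forall_valuation_X_le (hu : IsMonomialValuation u) :
    ∃ r < 1, ∀ i, u (X i) ≤ r :=
  ⟨Finset.univ.sup fun i => u (X i), Finset.sup_lt_iff zero_lt_one |>.mpr fun i _ => hu.X_lt_one i,
    fun i => Finset.le_sup (f := fun i => u (X i)) (Finset.mem_univ i)⟩

theorem exists_max_valuation_monomial (hu : IsMonomialValuation u) {s : Set (σ →₀ ℕ)}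
    (hs : s.Nonempty) : ∃ α ∈ s, ∀ β ∈ s, u (monomial β 1) ≤ u (monomial α 1) := by
  obtain ⟨r, hr, hX⟩ := hu.exists_lt_one_forall_valuation_X_le
  obtain ⟨α₁, hα₁⟩ := hs
  obtain ⟨d, hd⟩ := exists_pow_lt_of_lt_one (hu.valuation_monomial_one_pos α₁) hr
  -- monomials of degree `> d` are smaller than `α₁`, so only finitely many candidates remain
  have hsmall : ∀ β, d ≤ degree β → u (monomial β 1) < u (monomial α₁ 1) := fun β hβ =>
    (valuation_monomial_one_le_pow u hX β).trans_lt
      ((pow_le_pow_of_le_one zero_le hr.le hβ).trans_lt hd)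
  have hfin : (s ∩ {β | degree β ≤ d}).Finite := (finite_of_degree_le d).inter_of_right s
  have hα₁d : α₁ ∈ s ∩ {β | degree β ≤ d} :=
    ⟨hα₁, not_lt.mp fun h => (hsmall α₁ h.le).false⟩
  obtain ⟨α, ⟨hαs, -⟩, hmax⟩ := Set.exists_max_image _ (fun β => u (monomial β 1)) hfin ⟨α₁, hα₁d⟩
  refine ⟨α, hαs, fun β hβ => ?_⟩
  rcases le_or_gt (degree β) d with hβd | hβd
  · exact hmax β ⟨hβ, hβd⟩
  · exact ((hsmall β hβd.le).trans_le (hmax α₁ hα₁d)).le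

theorem valuation_eq_of_forall_lt (hu : IsMonomialValuation u) {f : MvPowerSeries σ k}
    {α : σ →₀ ℕ} (hα : coeff α f ≠ 0)
    (hmax : ∀ β ≠ α, coeff β f ≠ 0 → u (monomial β 1) < u (monomial α 1)) :
    u f = u (monomial α 1) := by
  classical
  obtain ⟨r, hr, hX⟩ := hu.exists_lt_one_forall_valuation_X_le
  obtain ⟨e, he⟩ := exists_pow_lt_of_lt_one (hu.valuation_monomial_one_pos α) hr
  -- split `f` into its part of degree `< e` and a remainder of valuation `≤ r ^ e`
  set T := (finite_of_degree_lt (σ := σ) e).toFinset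
  set P := ∑ β ∈ T, monomial β (coeff β f)
  have hαT : α ∈ T := by
    rw [Set.Finite.mem_toFinset, Set.mem_ofPred_eq]
    by_contra! h
    exact (valuation_monomial_one_le_pow u hX α |>.trans (pow_le_pow_of_le_one zero_le hr.le h)
      |>.trans_lt he).false
  have hP : u P = u (monomial α 1) := by
    rw [Valuation.map_sum_eq_of_lt u hαT, hu.valuation_monomial hα]
    intro β hβ
    rw [hu.valuation_monomial hα]
    rcases eq_or_ne (coeff β f) 0 with h | h
    · rw [h, map_zero, u.map_zero]
      exact hu.valuation_monomial_one_pos α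
    · rw [hu.valuation_monomial h]
      exact hmax β (by simpa using (Finset.mem_sdiff.mp hβ).2) h
  have hrest : u (f - P) ≤ r ^ e := by
    refine valuation_le_pow_of_le_order u hu.le_one hX (nat_le_order fun β hβ => ?_)
    have hβT : β ∈ T := (Set.Finite.mem_toFinset _).mpr hβ
    simp [P, coeff_monomial, hβT]
  rw [← add_sub_cancel P f, u.map_add_eq_of_lt_left (hrest.trans_lt (he.trans_eq hP.symm)), hP]

theorem exists_valuation_eq (hu : IsMonomialValuation u) {f : MvPowerSeries σ k} (hf : f ≠ 0) :
    ∃ α, coeff α f ≠ 0 ∧ u f = u (monomial α 1) ∧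
      ∀ β, coeff β f ≠ 0 → u (monomial β 1) ≤ u (monomial α 1) := by
  obtain ⟨α, hα, hmax⟩ :=
    hu.exists_max_valuation_monomial ((ne_zero_iff_exists_coeff_ne_zero f).mp hf)
  refine ⟨α, hα, hu.valuation_eq_of_forall_lt hα fun β hβα hβ => ?_, hmax⟩
  exact (hmax β hβ).lt_of_ne (hu.injective.ne hβα)

theorem valuation_pos (hu : IsMonomialValuation u) {f : MvPowerSeries σ k} (hf : f ≠ 0) :
    0 < u f := by
  obtain ⟨α, -, hfα, -⟩ := hu.exists_valuation_eq hf
  exact hfα ▸ hu.valuation_monomial_one_pos α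

theorem exists_valuation_sub_C_mul_lt (hu : IsMonomialValuation u) {f g : MvPowerSeries σ k}
    (hg : g ≠ 0) (hfg : u f ≤ u g) : ∃ c : k, u (f - C c * g) < u g := by
  rcases hfg.lt_or_eq with hlt | heq
  · exact ⟨0, by simpa using hlt⟩
  have hf : f ≠ 0 := by
    rintro rfl
    exact (hu.valuation_pos hg).ne (heq ▸ u.map_zero.symm)
  obtain ⟨α, hgα, hgv, hgmax⟩ := hu.exists_valuation_eq hg
  obtain ⟨β, hfβ, hfv, hfmax⟩ := hu.exists_valuation_eq hf
  obtain rfl : β = α := hu.injective (hfv.symm.trans (heq.trans hgv))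
  -- the leading terms cancel, so only monomials of smaller value survive
  refine ⟨coeff β f / coeff β g, ?_⟩
  set h := f - C (coeff β f / coeff β g) * g
  rcases eq_or_ne h 0 with h0 | h0
  · rw [h0, u.map_zero]
    exact hu.valuation_pos hg
  obtain ⟨γ, hγ, hhv, -⟩ := hu.exists_valuation_eq h0
  have hγβ : γ ≠ β := by
    rintro rfl
    exact hγ (by simp [h, coeff_C_mul, div_mul_cancel₀ _ hgα])
  have hγfg : coeff γ f ≠ 0 ∨ coeff γ g ≠ 0 := by
    by_contra! H
    exact hγ (by simp [h, coeff_C_mul, H.1, H.2])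
  rw [hhv, hgv]
  refine lt_of_le_of_ne ?_ (hu.injective.ne hγβ)
  rcases hγfg with hγ' | hγ'
  · exact hfmax γ hγ'
  · exact hgmax γ hγ'

theorem exists_valuation_sub_C_lt_one {K : Type*} [Field K] [Algebra (MvPowerSeries σ k) K]
    [IsFractionRing (MvPowerSeries σ k) K] {v : Valuation K ℝ≥0}
    (hu : IsMonomialValuation (v.comap (algebraMap (MvPowerSeries σ k) K))) {x : K}
    (hx : v x ≤ 1) : ∃ c : k, v (x - algebraMap (MvPowerSeries σ k) K (C c)) < 1 := by
  obtain ⟨f, g, hg, rfl⟩ := IsFractionRing.div_surjective (A := MvPowerSeries σ k) x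
  have hg0 : g ≠ 0 := nonZeroDivisors.ne_zero hg
  have hgv : 0 < v (algebraMap _ K g) := hu.valuation_pos hg0
  rw [map_div₀, div_le_one₀ hgv] at hx
  obtain ⟨c, hc⟩ := hu.exists_valuation_sub_C_mul_lt hg0 hx
  refine ⟨c, ?_⟩
  rw [div_sub' (IsFractionRing.to_map_ne_zero_of_mem_nonZeroDivisors hg), mul_comm, ← map_mul,
    ← map_sub, map_div₀, div_lt_one hgv]
  exact hc

end IsMonomialValuation

end MvPowerSeries

theorem stmt_8_general {k : Type*} [Field k] (n : ℕ)
    (v : Valuation (FractionRing (MvPowerSeries (Fin n) k)) NNReal)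
    (hle : ∀ f : MvPowerSeries (Fin n) k,
      v (algebraMap (MvPowerSeries (Fin n) k) (FractionRing (MvPowerSeries (Fin n) k)) f) ≤ 1)
    (hpos : ∀ i : Fin n, 0 <
      v (algebraMap (MvPowerSeries (Fin n) k) (FractionRing (MvPowerSeries (Fin n) k))
          (MvPowerSeries.X i)))
    (hlt : ∀ i : Fin n,
      v (algebraMap (MvPowerSeries (Fin n) k) (FractionRing (MvPowerSeries (Fin n) k))
          (MvPowerSeries.X i)) < 1)
    (hind : ∀ m : Fin n → ℤ,
      (∏ i, v (algebraMap (MvPowerSeries (Fin n) k) (FractionRing (MvPowerSeries (Fin n) k))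
          (MvPowerSeries.X i)) ^ m i) = 1 → m = 0) :
    Function.Bijective (fun c : k =>
      IsLocalRing.residue v.valuationSubring
        ⟨algebraMap (MvPowerSeries (Fin n) k) (FractionRing (MvPowerSeries (Fin n) k))
            (MvPowerSeries.C (σ := Fin n) (R := k) c),
          (Valuation.mem_valuationSubring_iff v _).mpr (hle _)⟩) := by
  have hu : MvPowerSeries.IsMonomialValuation
      (v.comap (algebraMap (MvPowerSeries (Fin n) k) (FractionRing (MvPowerSeries (Fin n) k)))) :=
    { le_one := hle
      X_pos := hpos
      X_lt_one := hlt
      injective := by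
        convert injective_prod_pow_of_prod_zpow_eq_one (fun i => (hpos i).ne') hind using 2
        exact MvPowerSeries.valuation_monomial_one _ _ }
  let φ : k →+* v.valuationSubring :=
    ((algebraMap _ _).comp MvPowerSeries.C).codRestrict v.valuationSubring.toSubring
      fun c => hle (MvPowerSeries.C c)
  refine ⟨((IsLocalRing.residue _).comp φ).injective, fun y => ?_⟩
  obtain ⟨x, rfl⟩ := IsLocalRing.residue_surjective y
  obtain ⟨c, hc⟩ := hu.exists_valuation_sub_C_lt_one ((v.mem_valuationSubring_iff _).mp x.2)
  refine ⟨c, (sub_eq_zero.mp ?_).symm⟩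
  rw [← map_sub, IsLocalRing.residue_eq_zero_iff, Valuation.mem_maximalIdeal_iff]
  exact hc

/-- For the monomial valuation on the fraction field of `k[[x₁,…,xₙ]]` (a valuation `≤ 1`
on power series whose values `0 < cᵢ < 1` on the variables are multiplicatively rationally
independent), the natural map from `k` to the residue field of the valuation ring is
bijective. -/
theorem stmt_8 {k : Type*} [Field k] (n : ℕ) (hn : 1 ≤ n)
    (v : Valuation (FractionRing (MvPowerSeries (Fin n) k)) NNReal)
    (hle : ∀ f : MvPowerSeries (Fin n) k,
      v (algebraMap (MvPowerSeries (Fin n) k) (FractionRing (MvPowerSeries (Fin n) k)) f) ≤ 1)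
    (hpos : ∀ i : Fin n, 0 <
      v (algebraMap (MvPowerSeries (Fin n) k) (FractionRing (MvPowerSeries (Fin n) k))
          (MvPowerSeries.X i)))
    (hlt : ∀ i : Fin n,
      v (algebraMap (MvPowerSeries (Fin n) k) (FractionRing (MvPowerSeries (Fin n) k))
          (MvPowerSeries.X i)) < 1)
    (hind : ∀ m : Fin n → ℤ,
      (∏ i, v (algebraMap (MvPowerSeries (Fin n) k) (FractionRing (MvPowerSeries (Fin n) k))
          (MvPowerSeries.X i)) ^ m i) = 1 → m = 0) :
    Function.Bijective (fun c : k =>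
      IsLocalRing.residue v.valuationSubring
        ⟨algebraMap (MvPowerSeries (Fin n) k) (FractionRing (MvPowerSeries (Fin n) k))
            (MvPowerSeries.C (σ := Fin n) (R := k) c),
          (Valuation.mem_valuationSubring_iff v _).mpr (hle _)⟩) :=
  stmt_8_general n v hle hpos hlt hind
end

section
/- Let k be a field, n ≥ 1, and let v be a valuation on the formal power series ring k[[x_1, …, x_n]] with values in ℝ≥0 such that v(f) ≤ 1 for every f, and such that the values c_i = v(x_i) satisfy 0 < c_i < 1 and are multiplicatively rationally independent. Then for any nonzero f, g ∈ k[[x_1, …, x_n]] with v(f) = v(g), there exists a nonzero scalar c ∈ k such that either f = c·g or v(f − c·g) < v(f). -/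
/-!
Since `v ≤ 1`, nonzero constants are units of value `1`, so the monomial `a xᵉ` (`a ≠ 0`) has
value `γ(e) = ∏ v(xᵢ) ^ eᵢ`, and `γ` is injective by the multiplicative independence of the
`v(xᵢ)`. A series with no terms of total degree `< N` is `∑ xᵢ hᵢ` with no `hᵢ` having terms of
degree `< N - 1`, so by induction its value is at most `r ^ N`, where `r = maxᵢ v(xᵢ) < 1`.
Hence the terms of a nonzero `f` of large value all lie in a finite truncation, and among them
there is a unique one, `a xᵉ`, of maximal value: `v f = γ(e)` and `v (f - a xᵉ) < γ(e)`.
If `v f = v g`, the dominant exponents of `f` and `g` agree, and `c = a / b` cancels the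
dominant terms.
-/

open MvPowerSeries Finsupp
open scoped NNReal

theorem MvPowerSeries.exists_eq_sum_X_mul_of_coeff_eq_zero {σ R : Type*} [Fintype σ]
    [CommSemiring R] {N : ℕ} {f : MvPowerSeries σ R}
    (hf : ∀ m : σ →₀ ℕ, degree m < N + 1 → coeff m f = 0) :
    ∃ h : σ → MvPowerSeries σ R, f = ∑ i, X i * h i ∧
      ∀ i m, degree m < N → coeff m (h i) = 0 := by
  classical
  let : LinearOrder σ := LinearOrder.lift' _ (Fintype.equivFin σ).injective
  -- `h i` collects the monomials of `f` whose first variable is `x i`, divided by `x i`.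
  let h : σ → MvPowerSeries σ R := fun i m =>
    if ∀ j < i, m j = 0 then coeff (m + single i 1) f else 0
  have coeff_h (i : σ) (m : σ →₀ ℕ) : coeff m (h i) =
      if ∀ j < i, m j = 0 then coeff (m + single i 1) f else 0 := rfl
  refine ⟨h, ?_, fun i m hm => ?_⟩
  · ext m
    rcases eq_or_ne m 0 with rfl | hm
    · simp [hf 0 (by simp), X, coeff_monomial_mul]
    set i₀ := m.support.min' (support_nonempty_iff.mpr hm)
    have first (i : σ) :
        (single i 1 ≤ m ∧ ∀ j < i, (m - single i 1 : σ →₀ ℕ) j = 0) ↔ i = i₀ := by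
      have hi₀ : m i₀ ≠ 0 := mem_support_iff.mp (Finset.min'_mem _ _)
      have below (j : σ) (hj : j < i₀) : m j = 0 :=
        notMem_support_iff.mp fun hj' => (Finset.min'_le _ j hj').not_gt hj
      simp only [single_le_iff, Nat.one_le_iff_ne_zero, tsub_apply, single_apply]
      constructor
      · rintro ⟨hi, hbelow⟩
        refine le_antisymm ?_ (Finset.min'_le _ i (mem_support_iff.mpr hi))
        by_contra! hlt
        simpa [hlt.ne', hi₀] using hbelow i₀ hlt
      · rintro rfl
        exact ⟨hi₀, fun j hj => by simp [below j hj]⟩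
    simp only [map_sum, X, coeff_monomial_mul, one_mul, coeff_h, ← ite_and]
    simp only [first]
    rw [Finset.sum_ite_eq' Finset.univ i₀, if_pos (Finset.mem_univ _), tsub_add_cancel_of_le]
    exact ((first i₀).mpr rfl).1
  · rw [coeff_h]
    split_ifs
    · exact hf _ (by simpa [map_add] using hm)
    · rfl

namespace Valuation

section Tail

variable {σ R Γ₀ : Type*} [Fintype σ] [CommRing R] [LinearOrderedCommMonoidWithZero Γ₀]
  (v : Valuation (MvPowerSeries σ R) Γ₀)

theorem map_le_pow_of_coeff_eq_zero (hle : ∀ f, v f ≤ 1) {r : Γ₀} (hr : ∀ i, v (X i) ≤ r) :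
    ∀ {N : ℕ} {f : MvPowerSeries σ R}, (∀ m : σ →₀ ℕ, degree m < N → coeff m f = 0) →
      v f ≤ r ^ N
  | 0, f, _ => by simpa using hle f
  | N + 1, f, hf => by
    obtain ⟨h, rfl, hh⟩ := exists_eq_sum_X_mul_of_coeff_eq_zero hf
    refine v.map_sum_le fun i _ => ?_
    rw [map_mul, pow_succ']
    exact mul_le_mul' (hr i) (map_le_pow_of_coeff_eq_zero hle hr (hh i))

theorem map_monomial_one (e : σ →₀ ℕ) : v (monomial e 1) = ∏ i, v (X i) ^ e i := by
  rw [monomial_one_eq, map_finsuppProd, prod_fintype _ _ fun _ => by simp]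
  simp only [map_pow]

end Tail

section Field

variable {σ k Γ₀ : Type*} [Field k] [LinearOrderedCommGroupWithZero Γ₀]
  (v : Valuation (MvPowerSeries σ k) Γ₀) (hle : ∀ f, v f ≤ 1)
include hle

theorem map_C_of_ne_zero {a : k} (ha : a ≠ 0) : v (C a) = 1 :=
  (IsTrivialOn.of_le_one v fun _ => hle _).eq_one a ha

theorem map_monomial_of_ne_zero (e : σ →₀ ℕ) {a : k} (ha : a ≠ 0) :
    v (monomial e a) = v (monomial e 1) := by
  rw [monomial_eq', map_mul, v.map_C_of_ne_zero hle ha, one_mul, monomial_one_eq]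

end Field

section Dominant

variable {σ k : Type*} [Fintype σ] [Field k] (v : Valuation (MvPowerSeries σ k) ℝ≥0)

theorem monomial_one_pos (hpos : ∀ i, 0 < v (X i)) (e : σ →₀ ℕ) : 0 < v (monomial e 1) := by
  rw [map_monomial_one]
  exact Finset.prod_pos fun i _ => pow_pos (hpos i) _

theorem injective_map_monomial_one (hpos : ∀ i, 0 < v (X i))
    (hind : ∀ m : σ → ℤ, ∏ i, v (X i) ^ m i = 1 → m = 0) :
    Function.Injective fun e : σ →₀ ℕ => v (monomial e 1) := by
  intro e e' (h : v (monomial e 1) = v (monomial e' 1))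
  have hquot : ∏ i, v (X i) ^ ((e i : ℤ) - e' i) = 1 := by
    simp only [zpow_sub₀ (hpos _).ne', zpow_natCast, Finset.prod_div_distrib]
    rw [← map_monomial_one, ← map_monomial_one, h, div_self (v.monomial_one_pos hpos e').ne']
  ext i
  simpa [sub_eq_zero] using congrFun (hind _ hquot) i

theorem exists_dominant_monomial (hle : ∀ f, v f ≤ 1) {r : ℝ≥0} (hr1 : r < 1)
    (hr : ∀ i, v (X i) ≤ r) (hpos : ∀ i, 0 < v (X i))
    (hind : ∀ m : σ → ℤ, ∏ i, v (X i) ^ m i = 1 → m = 0) {f : MvPowerSeries σ k} (hf : f ≠ 0) :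
    ∃ e, coeff e f ≠ 0 ∧ v f = v (monomial e 1) ∧
      v (f - monomial e (coeff e f)) < v (monomial e 1) := by
  classical
  obtain ⟨e₀, he₀⟩ := (ne_zero_iff_exists_coeff_ne_zero f).mp hf
  obtain ⟨N, hN⟩ := exists_pow_lt_of_lt_one (v.monomial_one_pos hpos e₀) hr1
  -- Terms of total degree `≥ N` have value `< v (x^e₀)`, so the dominant term of `f`
  -- is among the finitely many terms of the truncation `P`.
  set P := truncTotal N f
  have hPcoeff {e} (he : e ∈ P.support) : P.coeff e = coeff e f := by
    have := MvPolynomial.mem_support_iff.mp he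
    rw [coeff_truncTotal_eq_ite] at this ⊢
    exact if_pos (by_contra fun h => this (if_neg h))
  have htail : v (f - P) < v (monomial e₀ 1) := by
    refine lt_of_le_of_lt (v.map_le_pow_of_coeff_eq_zero hle hr fun m hm => ?_) hN
    rw [_root_.map_sub, MvPolynomial.coeff_coe, coeff_truncTotal _ hm, sub_self]
  have he₀P : e₀ ∈ P.support := by
    rw [MvPolynomial.mem_support_iff, coeff_truncTotal _ ?_]
    · exact he₀
    by_contra! hdeg
    refine (lt_of_le_of_lt (v.map_le_pow_of_coeff_eq_zero hle hr fun m hm => ?_) hN).false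
    exact coeff_monomial_ne (by rintro rfl; omega) _
  obtain ⟨e, heP, hmax⟩ := P.support.exists_max_image (fun e => v (monomial e 1)) ⟨e₀, he₀P⟩
  have hP : (P : MvPowerSeries σ k) = ∑ e ∈ P.support, monomial e (P.coeff e) := by
    conv_lhs => rw [P.as_sum, ← MvPolynomial.coeToMvPowerSeries.ringHom_apply, map_sum]
    simp only [MvPolynomial.coeToMvPowerSeries.ringHom_apply, MvPolynomial.coe_monomial]
  have hsplit : f - monomial e (coeff e f)
      = (f - P) + ∑ e' ∈ P.support.erase e, monomial e' (P.coeff e') := by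
    rw [hP, ← Finset.add_sum_erase _ _ heP, hPcoeff heP]
    ring
  have hlt : v (f - monomial e (coeff e f)) < v (monomial e 1) := by
    rw [hsplit]
    refine v.map_add_lt (htail.trans_le (hmax e₀ he₀P))
      (v.map_sum_lt (v.monomial_one_pos hpos e).ne' fun e' he' => ?_)
    obtain ⟨hne, he'P⟩ := Finset.mem_erase.mp he'
    rw [v.map_monomial_of_ne_zero hle _ (MvPolynomial.mem_support_iff.mp he'P)]
    exact (hmax e' he'P).lt_of_ne fun h => hne (v.injective_map_monomial_one hpos hind h)
  have he : coeff e f ≠ 0 := hPcoeff heP ▸ MvPolynomial.mem_support_iff.mp heP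
  refine ⟨e, he, ?_, hlt⟩
  rw [← v.map_monomial_of_ne_zero hle e he] at hlt ⊢
  rw [← v.map_add_eq_of_lt_left hlt, add_sub_cancel]

end Dominant

end Valuation

theorem stmt_10_general {k : Type*} [Field k] (n : ℕ)
    (v : Valuation (MvPowerSeries (Fin n) k) NNReal)
    (hle : ∀ f : MvPowerSeries (Fin n) k, v f ≤ 1)
    (hpos : ∀ i : Fin n, 0 < v (MvPowerSeries.X i))
    (hlt : ∀ i : Fin n, v (MvPowerSeries.X i) < 1)
    (hind : ∀ m : Fin n → ℤ, ∏ i, v (MvPowerSeries.X i) ^ m i = 1 → m = 0)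
    (f g : MvPowerSeries (Fin n) k) (hf : f ≠ 0) (hg : g ≠ 0) (hfg : v f = v g) :
    ∃ c : k, c ≠ 0 ∧
      (f = MvPowerSeries.C (σ := Fin n) (R := k) c * g ∨
        v (f - MvPowerSeries.C (σ := Fin n) (R := k) c * g) < v f) := by
  set r := Finset.univ.sup fun i => v (X i)
  have hr : ∀ i, v (X i) ≤ r := fun i => Finset.le_sup (f := fun i => v (X i)) (Finset.mem_univ i)
  have hr1 : r < 1 := (Finset.sup_lt_iff zero_lt_one).mpr fun i _ => hlt i
  obtain ⟨e, ha, hvf, hf'⟩ := v.exists_dominant_monomial hle hr1 hr hpos hind hf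
  obtain ⟨e', hb, hvg, hg'⟩ := v.exists_dominant_monomial hle hr1 hr hpos hind hg
  obtain rfl : e = e' := v.injective_map_monomial_one hpos hind (hvf.symm.trans (hfg.trans hvg))
  set a := coeff e f
  set b := coeff e g
  have hsplit : f - C (a / b) * g = (f - monomial e a) - C (a / b) * (g - monomial e b) := by
    rw [mul_sub, ← monomial_zero_eq_C_apply, monomial_mul_monomial, zero_add, div_mul_cancel₀ a hb]
    ring
  refine ⟨a / b, div_ne_zero ha hb, Or.inr ?_⟩
  rw [hsplit, hvf]
  refine v.map_sub_lt hf' ?_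
  rwa [map_mul, v.map_C_of_ne_zero hle (div_ne_zero ha hb), one_mul]

/-- For a valuation `v ≤ 1` on `k[[x₁,…,xₙ]]` with `0 < v(xᵢ) < 1` multiplicatively
rationally independent: any two nonzero power series with the same value agree up to a
nonzero scalar modulo higher value terms (each graded piece of `gr_ν` is one-dimensional). -/
theorem stmt_10 {k : Type*} [Field k] (n : ℕ) (hn : 1 ≤ n)
    (v : Valuation (MvPowerSeries (Fin n) k) NNReal)
    (hle : ∀ f : MvPowerSeries (Fin n) k, v f ≤ 1)
    (hpos : ∀ i : Fin n, 0 < v (MvPowerSeries.X i))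
    (hlt : ∀ i : Fin n, v (MvPowerSeries.X i) < 1)
    (hind : ∀ m : Fin n → ℤ, ∏ i, v (MvPowerSeries.X i) ^ m i = 1 → m = 0)
    (f g : MvPowerSeries (Fin n) k) (hf : f ≠ 0) (hg : g ≠ 0) (hfg : v f = v g) :
    ∃ c : k, c ≠ 0 ∧
      (f = MvPowerSeries.C (σ := Fin n) (R := k) c * g ∨
        v (f - MvPowerSeries.C (σ := Fin n) (R := k) c * g) < v f) :=
  stmt_10_general n v hle hpos hlt hind f g hf hg hfg
end

section
/- Let k be a field, n ≥ 1, and let c_1, …, c_n be multiplicatively rationally independent elements of ℝ≥0 with 0 < c_i < 1 for all i. Then there exists a valuation v on the fraction field of the formal power series ring k[[x_1, …, x_n]] with values in ℝ≥0 such that for every nonzero f ∈ k[[x_1, …, x_n]], v(f) equals the supremum over the exponent vectors α in the support of f of ∏_i c_i^{α_i} (and this supremum is attained); in particular v(x_i) = c_i, v is trivial on k, and v(f) ≤ 1 for all f ∈ k[[x_1, …, x_n]]. -/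
/-!
Give the monomial `x^α` the weight `w(α) = ∏ cᵢ^{αᵢ}` and a power series the largest weight
of a monomial in its support. Since every `cᵢ < 1`, only finitely many monomials have weight
above any fixed positive bound, so this largest weight is attained. Rational independence
makes `w` injective, so for `f, g` with heaviest monomials `x^α, x^β` the only way to write
`α + β = p + q` with `p, q` in the supports of `f, g` is `p = α, q = β`; hence the coefficient
of `x^{α+β}` in `fg` is a product of two nonzero coefficients and the weight is multiplicative.
The ultrametric inequality is immediate, and a valuation nonvanishing on nonzero elements of
a domain extends to its fraction field.
-/

open MvPowerSeries
open scoped NNReal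

section Weight

variable {σ : Type*} [Fintype σ] (c : σ → ℝ≥0)

noncomputable def monomialWeight (α : σ →₀ ℕ) : ℝ≥0 := ∏ i, c i ^ α i

@[simp]
lemma monomialWeight_zero : monomialWeight c 0 = 1 := by
  simp [monomialWeight]

lemma monomialWeight_add (α β : σ →₀ ℕ) :
    monomialWeight c (α + β) = monomialWeight c α * monomialWeight c β := by
  simp [monomialWeight, pow_add, Finset.prod_mul_distrib]

lemma monomialWeight_single (i : σ) : monomialWeight c (Finsupp.single i 1) = c i := by
  classical
  simp [monomialWeight, Finsupp.single_apply, pow_ite]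

variable {c}

lemma monomialWeight_pos (hpos : ∀ i, 0 < c i) (α : σ →₀ ℕ) : 0 < monomialWeight c α :=
  Finset.prod_pos fun i _ => pow_pos (hpos i) _

lemma monomialWeight_le_pow (hle : ∀ i, c i ≤ 1) (α : σ →₀ ℕ) (i : σ) :
    monomialWeight c α ≤ c i ^ α i := by
  classical
  rw [monomialWeight, ← Finset.prod_erase_mul _ _ (Finset.mem_univ i)]
  exact mul_le_of_le_one_left zero_le
    (Finset.prod_le_one (fun _ _ => zero_le) fun j _ => pow_le_one₀ zero_le (hle j))

lemma monomialWeight_le_one (hle : ∀ i, c i ≤ 1) (α : σ →₀ ℕ) : monomialWeight c α ≤ 1 :=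
  Finset.prod_le_one (fun _ _ => zero_le) fun i _ => pow_le_one₀ zero_le (hle i)

lemma monomialWeight_injective (hpos : ∀ i, 0 < c i)
    (hind : ∀ m : σ → ℤ, ∏ i, c i ^ m i = 1 → m = 0) :
    Function.Injective (monomialWeight c) := by
  intro α β h
  have hquot : ∏ i, c i ^ ((α i : ℤ) - β i) = 1 :=
    calc ∏ i, c i ^ ((α i : ℤ) - β i) = monomialWeight c α / monomialWeight c β := by
          rw [monomialWeight, monomialWeight, ← Finset.prod_div_distrib]
          refine Finset.prod_congr rfl fun i _ => ?_
          rw [zpow_sub₀ (hpos i).ne', zpow_natCast, zpow_natCast]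
      _ = 1 := by rw [h, div_self (monomialWeight_pos hpos β).ne']
  ext i
  simpa [sub_eq_zero] using congrFun (hind _ hquot) i

lemma finite_setOf_le_monomialWeight (hlt : ∀ i, c i < 1) {ε : ℝ≥0} (hε : 0 < ε) :
    {α : σ →₀ ℕ | ε ≤ monomialWeight c α}.Finite := by
  classical
  choose N hN using fun i => exists_pow_lt_of_lt_one hε (hlt i)
  refine (Set.finite_Iic (Finsupp.equivFunOnFinite.symm N)).subset fun α hα i => ?_
  by_contra! hgt
  have : c i ^ α i ≤ c i ^ N i := pow_le_pow_right_of_le_one' (hlt i).le hgt.le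
  exact (hN i).not_ge ((Set.mem_ofPred.mp hα).trans
    ((monomialWeight_le_pow (fun j => (hlt j).le) α i).trans this))

lemma exists_isMaxOn_monomialWeight (hpos : ∀ i, 0 < c i) (hlt : ∀ i, c i < 1)
    {S : Set (σ →₀ ℕ)} (hS : S.Nonempty) : ∃ α ∈ S, IsMaxOn (monomialWeight c) S α := by
  obtain ⟨α₀, hα₀⟩ := hS
  set T := S ∩ {β | monomialWeight c α₀ ≤ monomialWeight c β}
  have hα₀T : α₀ ∈ T := ⟨hα₀, le_refl (monomialWeight c α₀)⟩
  obtain ⟨α, ⟨hαS, -⟩, hmax⟩ := T.exists_max_image (monomialWeight c)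
    ((finite_setOf_le_monomialWeight hlt (monomialWeight_pos hpos α₀)).inter_of_right S)
    ⟨α₀, hα₀T⟩
  refine ⟨α, hαS, isMaxOn_iff.2 fun β hβ => ?_⟩
  rcases le_or_gt (monomialWeight c α₀) (monomialWeight c β) with h | h
  · exact hmax β ⟨hβ, h⟩
  · exact h.le.trans (hmax α₀ hα₀T)

end Weight

section PowerSeries

variable {σ R : Type*} [Fintype σ] [CommRing R] (c : σ → ℝ≥0)

noncomputable def monomialVal (f : MvPowerSeries σ R) : ℝ≥0 :=
  sSup (monomialWeight c '' {α | coeff α f ≠ 0})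

@[simp]
lemma monomialVal_zero : monomialVal c (0 : MvPowerSeries σ R) = 0 := by
  simp [monomialVal]

variable {c}

lemma monomialVal_eq_of_isMaxOn {f : MvPowerSeries σ R} {α : σ →₀ ℕ} (hα : coeff α f ≠ 0)
    (hmax : IsMaxOn (monomialWeight c) {β | coeff β f ≠ 0} α) :
    monomialVal c f = monomialWeight c α :=
  IsGreatest.csSup_eq ⟨⟨α, hα, rfl⟩, by rintro _ ⟨β, hβ, rfl⟩; exact isMaxOn_iff.1 hmax β hβ⟩

lemma monomialVal_le_one (hle : ∀ i, c i ≤ 1) (f : MvPowerSeries σ R) : monomialVal c f ≤ 1 :=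
  csSup_le' <| by rintro _ ⟨β, -, rfl⟩; exact monomialWeight_le_one hle β

lemma monomialWeight_le_monomialVal (hle : ∀ i, c i ≤ 1) {f : MvPowerSeries σ R}
    {α : σ →₀ ℕ} (hα : coeff α f ≠ 0) : monomialWeight c α ≤ monomialVal c f :=
  le_csSup ⟨1, by rintro _ ⟨β, -, rfl⟩; exact monomialWeight_le_one hle β⟩ ⟨α, hα, rfl⟩

lemma exists_monomialVal_eq (hpos : ∀ i, 0 < c i) (hlt : ∀ i, c i < 1)
    {f : MvPowerSeries σ R} (hf : f ≠ 0) :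
    ∃ α, coeff α f ≠ 0 ∧ IsMaxOn (monomialWeight c) {β | coeff β f ≠ 0} α ∧
      monomialVal c f = monomialWeight c α := by
  have hsupp : {β | coeff β f ≠ 0}.Nonempty := by
    by_contra! h
    exact hf (ext fun β => by simpa using Set.eq_empty_iff_forall_notMem.mp h β)
  obtain ⟨α, hα, hmax⟩ := exists_isMaxOn_monomialWeight hpos hlt hsupp
  exact ⟨α, hα, hmax, monomialVal_eq_of_isMaxOn hα hmax⟩

lemma monomialVal_ne_zero (hpos : ∀ i, 0 < c i) (hlt : ∀ i, c i < 1)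
    {f : MvPowerSeries σ R} (hf : f ≠ 0) : monomialVal c f ≠ 0 := by
  obtain ⟨α, -, -, hv⟩ := exists_monomialVal_eq hpos hlt hf
  exact hv ▸ (monomialWeight_pos hpos α).ne'

lemma monomialVal_monomial {α : σ →₀ ℕ} {a : R} (ha : a ≠ 0) :
    monomialVal c (monomial α a) = monomialWeight c α := by
  classical
  refine monomialVal_eq_of_isMaxOn (by simpa [coeff_monomial]) <| isMaxOn_iff.2 fun β hβ => ?_
  obtain rfl : β = α := by
    by_contra h
    exact hβ (by simp [coeff_monomial, h])
  exact le_rfl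

lemma monomialVal_add_le (hle : ∀ i, c i ≤ 1) (f g : MvPowerSeries σ R) :
    monomialVal c (f + g) ≤ max (monomialVal c f) (monomialVal c g) := by
  refine csSup_le' ?_
  rintro _ ⟨β, hβ, rfl⟩
  by_cases hf : coeff β f = 0
  · refine le_max_of_le_right (monomialWeight_le_monomialVal hle ?_)
    simpa [hf] using hβ
  · exact le_max_of_le_left (monomialWeight_le_monomialVal hle hf)

lemma monomialVal_mul_le (hle : ∀ i, c i ≤ 1) (f g : MvPowerSeries σ R) :
    monomialVal c (f * g) ≤ monomialVal c f * monomialVal c g := by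
  classical
  refine csSup_le' ?_
  rintro _ ⟨γ, hγ, rfl⟩
  rw [Set.mem_ofPred_eq, coeff_mul] at hγ
  obtain ⟨⟨p, q⟩, hpq, hterm⟩ := Finset.exists_ne_zero_of_sum_ne_zero hγ
  rw [Finset.HasAntidiagonal.mem_antidiagonal] at hpq
  rw [← hpq, monomialWeight_add]
  exact mul_le_mul' (monomialWeight_le_monomialVal hle (left_ne_zero_of_mul hterm))
    (monomialWeight_le_monomialVal hle (right_ne_zero_of_mul hterm))

lemma coeff_add_mul_of_isMaxOn (hpos : ∀ i, 0 < c i)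
    (hind : ∀ m : σ → ℤ, ∏ i, c i ^ m i = 1 → m = 0) {f g : MvPowerSeries σ R}
    {α β : σ →₀ ℕ} (hα : IsMaxOn (monomialWeight c) {γ | coeff γ f ≠ 0} α)
    (hβ : IsMaxOn (monomialWeight c) {γ | coeff γ g ≠ 0} β) :
    coeff (α + β) (f * g) = coeff α f * coeff β g := by
  classical
  rw [coeff_mul]
  refine Finset.sum_eq_single (α, β) ?_
    fun h => (h (by simp)).elim
  rintro ⟨p, q⟩ hpq hne
  by_contra hterm
  rw [Finset.HasAntidiagonal.mem_antidiagonal] at hpq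
  have hp : monomialWeight c p ≤ monomialWeight c α :=
    isMaxOn_iff.1 hα p (left_ne_zero_of_mul hterm)
  have hq : monomialWeight c q ≤ monomialWeight c β :=
    isMaxOn_iff.1 hβ q (right_ne_zero_of_mul hterm)
  have hprod : monomialWeight c p * monomialWeight c q =
      monomialWeight c α * monomialWeight c β := by
    rw [← monomialWeight_add, ← monomialWeight_add, hpq]
  have hp' : monomialWeight c p = monomialWeight c α := by
    refine hp.antisymm (le_of_not_gt fun hlt => hprod.not_lt ?_)
    exact mul_lt_mul_of_lt_of_le_of_pos_of_nonneg hlt hq (monomialWeight_pos hpos q) zero_le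
  have hq' : monomialWeight c q = monomialWeight c β := by
    rw [hp'] at hprod
    exact mul_left_cancel₀ (monomialWeight_pos hpos α).ne' hprod
  exact hne (by
    rw [monomialWeight_injective hpos hind hp', monomialWeight_injective hpos hind hq'])

variable [IsDomain R]

lemma monomialVal_mul (hpos : ∀ i, 0 < c i) (hlt : ∀ i, c i < 1)
    (hind : ∀ m : σ → ℤ, ∏ i, c i ^ m i = 1 → m = 0) (f g : MvPowerSeries σ R) :
    monomialVal c (f * g) = monomialVal c f * monomialVal c g := by
  have hle : ∀ i, c i ≤ 1 := fun i => (hlt i).le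
  rcases eq_or_ne f 0 with rfl | hf
  · simp
  rcases eq_or_ne g 0 with rfl | hg
  · simp
  obtain ⟨α, hα, hαmax, hvf⟩ := exists_monomialVal_eq hpos hlt hf
  obtain ⟨β, hβ, hβmax, hvg⟩ := exists_monomialVal_eq hpos hlt hg
  have hαβ : coeff (α + β) (f * g) ≠ 0 := by
    rw [coeff_add_mul_of_isMaxOn hpos hind hαmax hβmax]
    exact mul_ne_zero hα hβ
  refine (monomialVal_mul_le hle f g).antisymm ?_
  rw [hvf, hvg, ← monomialWeight_add]
  exact monomialWeight_le_monomialVal hle hαβ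

noncomputable def monomialValuation (hpos : ∀ i, 0 < c i) (hlt : ∀ i, c i < 1)
    (hind : ∀ m : σ → ℤ, ∏ i, c i ^ m i = 1 → m = 0) : Valuation (MvPowerSeries σ R) ℝ≥0 where
  toFun := monomialVal c
  map_zero' := monomialVal_zero c
  map_one' := by rw [← monomial_zero_one, monomialVal_monomial one_ne_zero,
    monomialWeight_zero]
  map_mul' := monomialVal_mul hpos hlt hind
  map_add_le_max' := monomialVal_add_le fun i => (hlt i).le

@[simp]
lemma monomialValuation_apply (hpos : ∀ i, 0 < c i) (hlt : ∀ i, c i < 1)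
    (hind : ∀ m : σ → ℤ, ∏ i, c i ^ m i = 1 → m = 0) (f : MvPowerSeries σ R) :
    monomialValuation hpos hlt hind f = monomialVal c f :=
  rfl

end PowerSeries

theorem stmt_11_general (k : Type*) [Field k] (n : ℕ)
    (c : Fin n → NNReal) (hpos : ∀ i, 0 < c i) (hlt : ∀ i, c i < 1)
    (hind : ∀ m : Fin n → ℤ, ∏ i, c i ^ m i = 1 → m = 0) :
    ∃ v : Valuation (FractionRing (MvPowerSeries (Fin n) k)) NNReal,
      (∀ f : MvPowerSeries (Fin n) k, f ≠ 0 →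
        (∃ α : Fin n →₀ ℕ, MvPowerSeries.coeff α f ≠ 0 ∧
          v (algebraMap (MvPowerSeries (Fin n) k) (FractionRing (MvPowerSeries (Fin n) k)) f) =
            ∏ i, c i ^ α i) ∧
        (∀ α : Fin n →₀ ℕ, MvPowerSeries.coeff α f ≠ 0 →
          ∏ i, c i ^ α i ≤
            v (algebraMap (MvPowerSeries (Fin n) k)
              (FractionRing (MvPowerSeries (Fin n) k)) f))) ∧
      (∀ i : Fin n,
        v (algebraMap (MvPowerSeries (Fin n) k) (FractionRing (MvPowerSeries (Fin n) k))
          (MvPowerSeries.X i)) = c i) ∧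
      (∀ a : k, a ≠ 0 →
        v (algebraMap (MvPowerSeries (Fin n) k) (FractionRing (MvPowerSeries (Fin n) k))
          (MvPowerSeries.C a : MvPowerSeries (Fin n) k)) = 1) ∧
      (∀ f : MvPowerSeries (Fin n) k,
        v (algebraMap (MvPowerSeries (Fin n) k)
          (FractionRing (MvPowerSeries (Fin n) k)) f) ≤ 1) := by
  set w : Valuation (MvPowerSeries (Fin n) k) ℝ≥0 := monomialValuation hpos hlt hind
  have hS : nonZeroDivisors _ ≤ w.supp.primeCompl := fun f hf =>
    monomialVal_ne_zero hpos hlt (nonZeroDivisors.ne_zero hf)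
  refine ⟨w.extendToLocalization hS _, fun f hf => ?_, fun i => ?_, fun a ha => ?_, fun f => ?_⟩
    <;> simp only [Valuation.extendToLocalization_apply_map_apply, w, monomialValuation_apply]
  · obtain ⟨α, hα, -, hv⟩ := exists_monomialVal_eq hpos hlt hf
    exact ⟨⟨α, hα, hv⟩, fun β hβ => monomialWeight_le_monomialVal (fun i => (hlt i).le) hβ⟩
  · rw [X, monomialVal_monomial one_ne_zero, monomialWeight_single]
  · rw [← monomial_zero_eq_C_apply, monomialVal_monomial ha, monomialWeight_zero]
  · exact monomialVal_le_one (fun i => (hlt i).le) f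

/-- Existence of the monomial valuation: given `0 < cᵢ < 1` in `ℝ≥0` multiplicatively
rationally independent, there is a valuation on the fraction field of `k[[x₁,…,xₙ]]`
whose value on every nonzero power series is the (attained) supremum of `∏ᵢ cᵢ^{αᵢ}` over
the support; in particular `v(xᵢ) = cᵢ`, `v` is trivial on `k`, and `v ≤ 1` on power
series. -/
theorem stmt_11 (k : Type*) [Field k] (n : ℕ) (hn : 1 ≤ n)
    (c : Fin n → NNReal) (hpos : ∀ i, 0 < c i) (hlt : ∀ i, c i < 1)
    (hind : ∀ m : Fin n → ℤ, ∏ i, c i ^ m i = 1 → m = 0) :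
    ∃ v : Valuation (FractionRing (MvPowerSeries (Fin n) k)) NNReal,
      (∀ f : MvPowerSeries (Fin n) k, f ≠ 0 →
        (∃ α : Fin n →₀ ℕ, MvPowerSeries.coeff α f ≠ 0 ∧
          v (algebraMap (MvPowerSeries (Fin n) k) (FractionRing (MvPowerSeries (Fin n) k)) f) =
            ∏ i, c i ^ α i) ∧
        (∀ α : Fin n →₀ ℕ, MvPowerSeries.coeff α f ≠ 0 →
          ∏ i, c i ^ α i ≤
            v (algebraMap (MvPowerSeries (Fin n) k)
              (FractionRing (MvPowerSeries (Fin n) k)) f))) ∧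
      (∀ i : Fin n,
        v (algebraMap (MvPowerSeries (Fin n) k) (FractionRing (MvPowerSeries (Fin n) k))
          (MvPowerSeries.X i)) = c i) ∧
      (∀ a : k, a ≠ 0 →
        v (algebraMap (MvPowerSeries (Fin n) k) (FractionRing (MvPowerSeries (Fin n) k))
          (MvPowerSeries.C a : MvPowerSeries (Fin n) k)) = 1) ∧
      (∀ f : MvPowerSeries (Fin n) k,
        v (algebraMap (MvPowerSeries (Fin n) k)
          (FractionRing (MvPowerSeries (Fin n) k)) f) ≤ 1) :=
  stmt_11_general k n c hpos hlt hind
end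

section
/- Let t, n̄_R, ω_R, n̄_S, ω_S be positive integers and a_R, b_R, a_S, b_S be natural numbers satisfying: n̄_R·b_R − ω_R·a_R = 1, n̄_S·b_S − ω_S·a_S = 1, ω_S·n̄_R = t·ω_R·n̄_S, and n̄_S·t·b_R − ω_S·a_R = t. Then b_S·n̄_R − a_S·t·ω_R = 1, n̄_S = n̄_R, and ω_S = t·ω_R. -/
section StableExtension

variable {R : Type*} [CommRing R] [NoZeroDivisors R] {t nR wR nS wS aR bR : R}

/-- Multiplying the determinant condition for `R` by `t·n̄_S` and eliminating with the stability
and triangularity conditions leaves `t·n̄_S = t·n̄_R`. -/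
theorem nbar_eq_of_stable (ht : t ≠ 0) (hdetR : nR * bR - wR * aR = 1)
    (htri : wS * nR = t * wR * nS) (hstab : nS * t * bR - wS * aR = t) : nS = nR :=
  mul_right_cancel₀ ht <| by linear_combination nR * hstab + aR * htri - t * nS * hdetR

theorem omega_eq_of_stable (ht : t ≠ 0) (hnR : nR ≠ 0) (hdetR : nR * bR - wR * aR = 1)
    (htri : wS * nR = t * wR * nS) (hstab : nS * t * bR - wS * aR = t) : wS = t * wR := by
  obtain rfl := nbar_eq_of_stable ht hdetR htri hstab
  exact mul_right_cancel₀ hnR htri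

end StableExtension

theorem stmt_12_general (t nR wR nS wS aR bR aS bS : ℤ)
    (ht : 0 < t) (hnR : 0 < nR)
    (h1 : nR * bR - wR * aR = 1)
    (h2 : nS * bS - wS * aS = 1)
    (h3 : wS * nR = t * wR * nS)
    (h4 : nS * t * bR - wS * aR = t) :
    bS * nR - aS * t * wR = 1 ∧ nS = nR ∧ wS = t * wR := by
  have hn : nS = nR := nbar_eq_of_stable ht.ne' h1 h3 h4
  have hw : wS = t * wR := omega_eq_of_stable ht.ne' hnR.ne' h1 h3 h4
  subst hn hw
  exact ⟨by linear_combination h2, rfl, rfl⟩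

/-- The matrix computation of Section 4 of the paper (equations (10)–(12)): from the
determinant identities `n̄_R·b_R − ω_R·a_R = 1`, `n̄_S·b_S − ω_S·a_S = 1`, the
triangularity condition `ω_S·n̄_R = t·ω_R·n̄_S`, and the stability condition
`n̄_S·t·b_R − ω_S·a_R = t`, one deduces `b_S·n̄_R − a_S·t·ω_R = 1`, `n̄_S = n̄_R` and
`ω_S = t·ω_R`. -/
theorem stmt_12 (t nR wR nS wS aR bR aS bS : ℤ)
    (ht : 0 < t) (hnR : 0 < nR) (hwR : 0 < wR) (hnS : 0 < nS) (hwS : 0 < wS)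
    (haR : 0 ≤ aR) (hbR : 0 ≤ bR) (haS : 0 ≤ aS) (hbS : 0 ≤ bS)
    (h1 : nR * bR - wR * aR = 1)
    (h2 : nS * bS - wS * aS = 1)
    (h3 : wS * nR = t * wR * nS)
    (h4 : nS * t * bR - wS * aR = t) :
    bS * nR - aS * t * wR = 1 ∧ nS = nR ∧ wS = t * wR :=
  stmt_12_general t nR wR nS wS aR bR aS bS ht hnR h1 h2 h3 h4
end
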